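/- arXiv:1604.01649 — 6 statements merged into one kernel-verified Lean document; each statement's English description precedes it below -/
import Mathlib

section
/- Let F : ℝ' → ℝ' be strictly decreasing on the positive reals, and let (x_n)_{n ∈ ℤ} be a strictly increasing bi-infinite sequence of reals such that for every n the series of forces from each side converges and the net force vanishes, i.e. ∑_{k<n} F(x_n - x_k) = ∑_{k>n} F(x_k - x_n) (all sums convergent). If there exists an index m such that x_{m+1} - x_m ≥ x_{k+1} - x_k for all k ∈ ℤ (i.e. a maximal gap is attained), then the sequence is an arithmetic progression: x_{k+1} - x_k is constant. -/
/-- An equilibrium configuration with a maximal gap is an arithmetic progression. -/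
theorem stmt_0 (F : ℝ → ℝ)
    (hFpos : ∀ d, 0 < d → 0 < F d)
    (hFanti : ∀ a b, 0 < a → a < b → F b < F a)
    (x : ℤ → ℝ) (hx : StrictMono x)
    (hsumL : ∀ n : ℤ, Summable (fun k : {k : ℤ // k < n} => F (x n - x k.1)))
    (hsumR : ∀ n : ℤ, Summable (fun k : {k : ℤ // n < k} => F (x k.1 - x n)))
    (heq : ∀ n : ℤ,
      (∑' k : {k : ℤ // k < n}, F (x n - x k.1)) =
      (∑' k : {k : ℤ // n < k}, F (x k.1 - x n)))
    (m : ℤ) (hmax : ∀ k : ℤ, x (k + 1) - x k ≤ x (m + 1) - x m) :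
    ∀ k : ℤ, x (k + 1) - x k = x 1 - x 0 := by
  have Fle : ∀ a b : ℝ, 0 < a → a ≤ b → F b ≤ F a := by
    intro a b ha hab
    rcases eq_or_lt_of_le hab with rfl | h
    · exact le_refl _
    · exact (hFanti a b ha h).le
  have Finj : ∀ a b : ℝ, 0 < a → 0 < b → F a = F b → a = b := by
    intro a b ha hb h
    by_contra hne
    rcases lt_or_gt_of_ne hne with hl | hl
    · exact absurd h (ne_of_gt (hFanti a b ha hl))
    · exact absurd h (ne_of_lt (hFanti b a hb hl))
  -- reindexing equivalences
  let e1 : {k : ℤ // k < m} ≃ {k : ℤ // k < m + 1} :=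
    ⟨fun k => ⟨k.1 + 1, by omega⟩, fun k => ⟨k.1 - 1, by omega⟩,
     fun k => Subtype.ext (by simp), fun k => Subtype.ext (by simp)⟩
  let e2 : {k : ℤ // m < k} ≃ {k : ℤ // m + 1 < k} :=
    ⟨fun k => ⟨k.1 + 1, by omega⟩, fun k => ⟨k.1 - 1, by omega⟩,
     fun k => Subtype.ext (by simp), fun k => Subtype.ext (by simp)⟩
  -- reindexed equilibrium at m+1
  have hB1 : (∑' k : {k : ℤ // k < m}, F (x (m+1) - x (k.1+1)))
      = ∑' k : {k : ℤ // k < m+1}, F (x (m+1) - x k.1) :=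
    e1.tsum_eq (fun k : {k : ℤ // k < m+1} => F (x (m+1) - x k.1))
  have hB2 : (∑' k : {k : ℤ // m < k}, F (x (k.1+1) - x (m+1)))
      = ∑' k : {k : ℤ // m+1 < k}, F (x k.1 - x (m+1)) :=
    e2.tsum_eq (fun k : {k : ℤ // m+1 < k} => F (x k.1 - x (m+1)))
  have hSL1 : Summable (fun k : {k : ℤ // k < m} => F (x (m+1) - x (k.1+1))) :=
    (e1.summable_iff (f := fun k : {k : ℤ // k < m+1} => F (x (m+1) - x k.1))).2 (hsumL (m+1))
  have hSR1 : Summable (fun k : {k : ℤ // m < k} => F (x (k.1+1) - x (m+1))) :=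
    (e2.summable_iff (f := fun k : {k : ℤ // m+1 < k} => F (x k.1 - x (m+1)))).2 (hsumR (m+1))
  have hB' : (∑' k : {k : ℤ // k < m}, F (x (m+1) - x (k.1+1)))
      = ∑' k : {k : ℤ // m < k}, F (x (k.1+1) - x (m+1)) := by
    rw [hB1, hB2]; exact heq (m+1)
  have hA := heq m
  -- termwise inequalities
  have hLterm : ∀ k : {k : ℤ // k < m}, F (x (m+1) - x (k.1+1)) ≤ F (x m - x k.1) := by
    intro k
    have h1 : (0:ℝ) < x m - x k.1 := sub_pos.2 (hx k.2)
    have h2 : x m - x k.1 ≤ x (m+1) - x (k.1+1) := by have := hmax k.1; linarith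
    exact Fle _ _ h1 h2
  have hRterm : ∀ k : {k : ℤ // m < k}, F (x k.1 - x m) ≤ F (x (k.1+1) - x (m+1)) := by
    intro k
    have h1 : (0:ℝ) < x (k.1+1) - x (m+1) := sub_pos.2 (hx (by omega))
    have h2 : x (k.1+1) - x (m+1) ≤ x k.1 - x m := by have := hmax k.1; linarith
    exact Fle _ _ h1 h2
  have hLle : (∑' k : {k : ℤ // k < m}, F (x (m+1) - x (k.1+1)))
      ≤ ∑' k : {k : ℤ // k < m}, F (x m - x k.1) :=
    Summable.tsum_le_tsum hLterm hSL1 (hsumL m)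
  have hRle : (∑' k : {k : ℤ // m < k}, F (x k.1 - x m))
      ≤ ∑' k : {k : ℤ // m < k}, F (x (k.1+1) - x (m+1)) :=
    Summable.tsum_le_tsum hRterm (hsumR m) hSR1
  -- closing the chain
  have h2 : (∑' k : {k : ℤ // m < k}, F (x (k.1+1) - x (m+1)))
      ≤ ∑' k : {k : ℤ // m < k}, F (x k.1 - x m) := by
    rw [← hB']; exact hLle.trans hA.le
  have hR_eq : (∑' k : {k : ℤ // m < k}, F (x k.1 - x m))
      = ∑' k : {k : ℤ // m < k}, F (x (k.1+1) - x (m+1)) := le_antisymm hRle h2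
  have h3 : (∑' k : {k : ℤ // k < m}, F (x m - x k.1))
      ≤ ∑' k : {k : ℤ // k < m}, F (x (m+1) - x (k.1+1)) := by
    rw [hB']; exact hA.le.trans hRle
  have hL_eq : (∑' k : {k : ℤ // k < m}, F (x (m+1) - x (k.1+1)))
      = ∑' k : {k : ℤ // k < m}, F (x m - x k.1) := le_antisymm hLle h3
  -- termwise equalities
  have hRtermEq : ∀ k : {k : ℤ // m < k}, F (x k.1 - x m) = F (x (k.1+1) - x (m+1)) := by
    intro k
    by_contra hne
    have hlt : F (x k.1 - x m) < F (x (k.1+1) - x (m+1)) := lt_of_le_of_ne (hRterm k) hne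
    exact (Summable.tsum_lt_tsum hRterm hlt (hsumR m) hSR1).ne hR_eq
  have hLtermEq : ∀ k : {k : ℤ // k < m}, F (x (m+1) - x (k.1+1)) = F (x m - x k.1) := by
    intro k
    by_contra hne
    have hlt : F (x (m+1) - x (k.1+1)) < F (x m - x k.1) := lt_of_le_of_ne (hLterm k) hne
    exact (Summable.tsum_lt_tsum hLterm hlt hSL1 (hsumL m)).ne hL_eq
  -- all gaps equal the gap at m
  have hg : ∀ k : ℤ, x (k+1) - x k = x (m+1) - x m := by
    intro k
    rcases lt_trichotomy k m with h | rfl | h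
    · have h1 : (0:ℝ) < x (m+1) - x (k+1) := sub_pos.2 (hx (by omega))
      have h2 : (0:ℝ) < x m - x k := sub_pos.2 (hx h)
      have := Finj _ _ h1 h2 (hLtermEq ⟨k, h⟩)
      linarith
    · rfl
    · have h1 : (0:ℝ) < x k - x m := sub_pos.2 (hx h)
      have h2 : (0:ℝ) < x (k+1) - x (m+1) := sub_pos.2 (hx (by omega))
      have := Finj _ _ h1 h2 (hRtermEq ⟨k, h⟩)
      linarith
  intro k
  have hk := hg k
  have h0 := hg 0
  norm_num at h0
  linarith
end

section
/- With F and (x_n) as above (an equilibrium configuration for a strictly decreasing positive force function F), if there exists an index m such that x_{m+1} - x_m ≤ x_{k+1} - x_k for all k ∈ ℤ (a minimal gap is attained), then x_{k+1} - x_k is constant, i.e. the configuration is an arithmetic progression. -/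
/-!
Let `g = x (m + 1) - x m` be a smallest gap. Subtracting the equilibrium equations at `m` and
`m + 1` and cancelling the common terms leaves
`∑ (F d - F (d + g)) + ∑ (F e - F (e + g)) = 2 F g`,
where `d` runs over the distances from `x m` to the points on its left and `e` over those from
`x (m + 1)` to the points on its right. Consecutive distances differ by at least `g`, so each sum
telescopes to at most its first term, `F (x m - x (m - 1))` resp. `F (x (m + 2) - x (m + 1))`,
and each of these is at most `F g`. Hence both are equal to `F g`, the two neighbouring gaps
equal `g`, and induction spreads this to every gap.
-/

open Set

def natEquivLt (n : ℤ) : ℕ ≃ {k : ℤ // k < n} where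
  toFun j := ⟨n - 1 - j, by omega⟩
  invFun k := (n - 1 - k.1).toNat
  left_inv j := by dsimp only; omega
  right_inv k := by ext; have := k.2; dsimp only; omega

def natEquivGt (n : ℤ) : ℕ ≃ {k : ℤ // n < k} where
  toFun j := ⟨n + 1 + j, by omega⟩
  invFun k := (k.1 - n - 1).toNat
  left_inv j := by dsimp only; omega
  right_inv k := by ext; have := k.2; dsimp only; omega

section Reindex

variable {α : Type*} [AddCommMonoid α] [TopologicalSpace α] (f : ℤ → α) (n : ℤ)

theorem summable_subtype_lt_iff :
    Summable (fun k : {k : ℤ // k < n} => f k) ↔ Summable fun j : ℕ => f (n - 1 - j) :=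
  (natEquivLt n).summable_iff.symm

theorem tsum_subtype_lt :
    ∑' k : {k : ℤ // k < n}, f k = ∑' j : ℕ, f (n - 1 - j) :=
  ((natEquivLt n).tsum_eq _).symm

theorem summable_subtype_gt_iff :
    Summable (fun k : {k : ℤ // n < k} => f k) ↔ Summable fun j : ℕ => f (n + 1 + j) :=
  (natEquivGt n).summable_iff.symm

theorem tsum_subtype_gt :
    ∑' k : {k : ℤ // n < k}, f k = ∑' j : ℕ, f (n + 1 + j) :=
  ((natEquivGt n).tsum_eq _).symm

end Reindex

theorem tsum_comp_le_add_tsum_comp_add_of_gaps {F : ℝ → ℝ} (hF : AntitoneOn F (Ioi 0)) {g : ℝ}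
    (hg : 0 ≤ g) {a : ℕ → ℝ} (hpos : ∀ j, 0 < a j) (ha : ∀ j, a j + g ≤ a (j + 1))
    (hs : Summable fun j => F (a j)) (hs' : Summable fun j => F (g + a j)) :
    ∑' j, F (a j) ≤ F (a 0) + ∑' j, F (g + a j) := by
  rw [hs.tsum_eq_zero_add]
  gcongr with j
  · exact (summable_nat_add_iff 1).2 hs
  · exact hF (by simp only [mem_Ioi]; linarith [hpos j]) (hpos (j + 1)) (by linarith [ha j])

theorem heads_eq_of_tsum_balance {F : ℝ → ℝ} (hF : StrictAntiOn F (Ioi 0)) {g : ℝ}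
    (hg : 0 < g) {a b : ℕ → ℝ} (ha0 : g ≤ a 0) (hb0 : g ≤ b 0)
    (ha : ∀ j, a j + g ≤ a (j + 1)) (hb : ∀ j, b j + g ≤ b (j + 1))
    (hsa : Summable fun j => F (a j)) (hsa' : Summable fun j => F (g + a j))
    (hsb : Summable fun j => F (b j)) (hsb' : Summable fun j => F (g + b j))
    (hbal_a : ∑' j, F (a j) = F g + ∑' j, F (g + b j))
    (hbal_b : F g + ∑' j, F (g + a j) = ∑' j, F (b j)) :
    a 0 = g ∧ b 0 = g := by
  have hpos : ∀ c : ℕ → ℝ, g ≤ c 0 → (∀ j, c j + g ≤ c (j + 1)) → ∀ j, 0 < c j :=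
    fun c h0 hc j => hg.trans_le (Nat.rec h0 (fun j ih => by linarith [hc j]) j)
  have hFa := tsum_comp_le_add_tsum_comp_add_of_gaps hF.antitoneOn hg.le (hpos a ha0 ha) ha hsa hsa'
  have hFb := tsum_comp_le_add_tsum_comp_add_of_gaps hF.antitoneOn hg.le (hpos b hb0 hb) hb hsb hsb'
  have hFa0 : F (a 0) ≤ F g := hF.antitoneOn hg (hpos a ha0 ha 0) ha0
  have hFb0 : F (b 0) ≤ F g := hF.antitoneOn hg (hpos b hb0 hb 0) hb0
  exact ⟨hF.injOn (hpos a ha0 ha 0) hg (by linarith),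
    hF.injOn (hpos b hb0 hb 0) hg (by linarith)⟩

theorem adjacent_gaps_eq_of_min_gap {F : ℝ → ℝ} (hF : StrictAntiOn F (Ioi 0)) {x : ℤ → ℝ}
    (hx : StrictMono x)
    (hsumL : ∀ n : ℤ, Summable (fun k : {k : ℤ // k < n} => F (x n - x k.1)))
    (hsumR : ∀ n : ℤ, Summable (fun k : {k : ℤ // n < k} => F (x k.1 - x n)))
    (heq : ∀ n : ℤ,
      (∑' k : {k : ℤ // k < n}, F (x n - x k.1)) =
      (∑' k : {k : ℤ // n < k}, F (x k.1 - x n)))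
    {m : ℤ} (hmin : ∀ k : ℤ, x (m + 1) - x m ≤ x (k + 1) - x k) :
    x m - x (m - 1) = x (m + 1) - x m ∧ x (m + 2) - x (m + 1) = x (m + 1) - x m := by
  set g := x (m + 1) - x m
  set a : ℕ → ℝ := fun j => x m - x (m - 1 - j)
  set b : ℕ → ℝ := fun j => x (m + 2 + j) - x (m + 1)
  have hL : ∀ n, Summable fun j : ℕ => F (x n - x (n - 1 - j)) := fun n =>
    (summable_subtype_lt_iff (fun k => F (x n - x k)) n).1 (hsumL n)
  have hR : ∀ n, Summable fun j : ℕ => F (x (n + 1 + j) - x n) := fun n =>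
    (summable_subtype_gt_iff (fun k => F (x k - x n)) n).1 (hsumR n)
  have hbal : ∀ n, ∑' j : ℕ, F (x n - x (n - 1 - j)) = ∑' j : ℕ, F (x (n + 1 + j) - x n) :=
    fun n => by
      rw [← tsum_subtype_lt (fun k => F (x n - x k)), ← tsum_subtype_gt (fun k => F (x k - x n))]
      exact heq n
  have ha_shift : ∀ j : ℕ, x (m + 1) - x (m + 1 - 1 - ↑(j + 1)) = g + a j := fun j => by
    simp only [g, a]; push_cast; ring_nf
  have hb_shift : ∀ j : ℕ, x (m + 1 + ↑(j + 1)) - x m = g + b j := fun j => by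
    simp only [g, b]; push_cast; ring_nf
  have hb_eq : ∀ j : ℕ, x (m + 1 + 1 + j) - x (m + 1) = b j := fun j => by
    simp only [b]; ring_nf
  have hsa' : Summable fun j => F (g + a j) := by
    simpa only [ha_shift] using (summable_nat_add_iff 1).2 (hL (m + 1))
  have hsb : Summable fun j => F (b j) := by simpa only [hb_eq] using hR (m + 1)
  have hsb' : Summable fun j => F (g + b j) := by
    simpa only [hb_shift] using (summable_nat_add_iff 1).2 (hR m)
  have hbal_a : ∑' j, F (a j) = F g + ∑' j, F (g + b j) := by
    simpa only [(hR m).tsum_eq_zero_add, hb_shift, Nat.cast_zero, add_zero] using hbal m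
  have hbal_b : F g + ∑' j, F (g + a j) = ∑' j, F (b j) := by
    have h := hbal (m + 1)
    rw [(hL (m + 1)).tsum_eq_zero_add] at h
    simp only [ha_shift, hb_eq] at h
    simpa only [Nat.cast_zero, sub_zero, add_sub_cancel_right] using h
  have ha0 : g ≤ a 0 := by simpa [a] using hmin (m - 1)
  have hb0 : g ≤ b 0 := by simpa [b, add_assoc] using hmin (m + 1)
  have ha : ∀ j, a j + g ≤ a (j + 1) := fun j => by
    have := hmin (m - 2 - j); simp only [a]; push_cast; ring_nf at this ⊢; linarith
  have hb : ∀ j, b j + g ≤ b (j + 1) := fun j => by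
    have := hmin (m + 2 + j); simp only [b]; push_cast; ring_nf at this ⊢; linarith
  obtain ⟨ha0', hb0'⟩ := heads_eq_of_tsum_balance hF (sub_pos.2 (hx (lt_add_one m)))
    ha0 hb0 ha hb (hL m) hsa' hsb hsb' hbal_a hbal_b
  simpa [a, b] using And.intro ha0' hb0'

theorem stmt_1_general (F : ℝ → ℝ)
    (hFanti : ∀ a b, 0 < a → a < b → F b < F a)
    (x : ℤ → ℝ) (hx : StrictMono x)
    (hsumL : ∀ n : ℤ, Summable (fun k : {k : ℤ // k < n} => F (x n - x k.1)))
    (hsumR : ∀ n : ℤ, Summable (fun k : {k : ℤ // n < k} => F (x k.1 - x n)))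
    (heq : ∀ n : ℤ,
      (∑' k : {k : ℤ // k < n}, F (x n - x k.1)) =
      (∑' k : {k : ℤ // n < k}, F (x k.1 - x n)))
    (m : ℤ) (hmin : ∀ k : ℤ, x (m + 1) - x m ≤ x (k + 1) - x k) :
    ∀ k : ℤ, x (k + 1) - x k = x 1 - x 0 := by
  have hF : StrictAntiOn F (Ioi 0) := fun a ha b _ hab => hFanti a b ha hab
  have hadj : ∀ k, x (k + 1) - x k = x (m + 1) - x m →
      x k - x (k - 1) = x (k + 1) - x k ∧ x (k + 2) - x (k + 1) = x (k + 1) - x k :=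
    fun k hk => adjacent_gaps_eq_of_min_gap hF hx hsumL hsumR heq (hk ▸ hmin)
  have hgap : ∀ k, x (k + 1) - x k = x (m + 1) - x m := by
    intro k
    induction k using Int.inductionOn' (b := m) with
    | zero => rfl
    | succ k _ ih => rw [add_assoc, one_add_one_eq_two, (hadj k ih).2, ih]
    | pred k _ ih => rw [sub_add_cancel, (hadj k ih).1, ih]
  intro k
  rw [hgap k, ← hgap 0, zero_add]

/-- An equilibrium configuration with a minimal gap is an arithmetic progression. -/
theorem stmt_1 (F : ℝ → ℝ)
    (hFpos : ∀ d, 0 < d → 0 < F d)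
    (hFanti : ∀ a b, 0 < a → a < b → F b < F a)
    (x : ℤ → ℝ) (hx : StrictMono x)
    (hsumL : ∀ n : ℤ, Summable (fun k : {k : ℤ // k < n} => F (x n - x k.1)))
    (hsumR : ∀ n : ℤ, Summable (fun k : {k : ℤ // n < k} => F (x k.1 - x n)))
    (heq : ∀ n : ℤ,
      (∑' k : {k : ℤ // k < n}, F (x n - x k.1)) =
      (∑' k : {k : ℤ // n < k}, F (x k.1 - x n)))
    (m : ℤ) (hmin : ∀ k : ℤ, x (m + 1) - x m ≤ x (k + 1) - x k) :
    ∀ k : ℤ, x (k + 1) - x k = x 1 - x 0 :=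
  stmt_1_general F hFanti x hx hsumL hsumR heq m hmin
end

section
/- Every periodic equilibrium configuration is trivial: if (x_n)_{n∈ℤ} is an equilibrium configuration (for a strictly decreasing positive force F) and there exist p ∈ ℕ, p ≥ 1, and L > 0 with x_{n+p} = x_n + L for all n, then the gaps x_{k+1} - x_k are all equal. -/
/-!
Grouping the points on each side of `x n` by the residue of their index modulo `p` turns the
equilibrium condition into the finite balance
`∑ r < p, G (x n - x (n - r - 1)) = ∑ r < p, G (x (n + r + 1) - x n)`
for the periodized force `G t = ∑ q, F (q L + t)`, which is again strictly decreasing.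

Put `c = L / p`. Summed over one period `i` and over `r < p`, the products
`(G ((r + 1) c) - G (x (k + i + r + 1) - x (k + i))) * (x (k + i + r + 1) - x (k + i) - (r + 1) c)`
are nonnegative because `G` is decreasing, but their sum vanishes: the `G ((r + 1) c)` part
because the `(r + 1)`-gaps average to `(r + 1) c` over a period, and the other part because,
writing each `(r + 1)`-gap excess as a sum of `1`-gap excesses and shifting indices, it becomes
`∑ i, (x (k + i + 1) - x (k + i) - c) * D (k + i)` for a potential `D` that the balance makes
constant. So every product vanishes, and every gap equals `c`.
-/

open Finset Set Function

theorem tsum_eq_sum_range_tsum_mul_add {α : Type*} [AddCommGroup α] [UniformSpace α]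
    [IsUniformAddGroup α] [CompleteSpace α] [T0Space α] {f : ℕ → α} (hf : Summable f)
    {p : ℕ} (hp : p ≠ 0) :
    ∑' m, f m = ∑ r ∈ range p, ∑' q : ℕ, f (q * p + r) := by
  have : NeZero p := ⟨hp⟩
  let e : Fin p × ℕ ≃ ℕ := (Equiv.prodComm _ _).trans (Nat.divModEquiv p).symm
  have he : ∀ z, e z = z.2 * p + z.1 := fun _ => rfl
  rw [← e.tsum_eq, Summable.tsum_prod (f := fun z => f (e z)) (e.summable_iff.2 hf), tsum_fintype,
    ← Fin.sum_univ_eq_sum_range (fun r => ∑' q : ℕ, f (q * p + r))]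
  simp only [he]

theorem Function.Periodic.sum_range_add {M : Type*} [AddCancelCommMonoid M] {h : ℤ → M} {p : ℕ}
    (hh : Periodic h p) (a : ℤ) : ∑ i ∈ range p, h (a + i) = ∑ i ∈ range p, h i := by
  have hstep : Periodic (fun a : ℤ => ∑ i ∈ range p, h (a + i)) 1 := fun a => by
    have h₁ := sum_range_succ' (fun i : ℕ => h (a + i)) p
    rw [sum_range_succ, Nat.cast_zero, add_zero, hh a] at h₁
    push_cast at h₁
    simp only [← add_assoc] at h₁
    simpa only [add_right_comm] using (add_right_cancel h₁).symm
  simpa using hstep.int_mul_eq a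

theorem sum_range_sub_int {M : Type*} [AddCommGroup M] (y : ℤ → M) (a : ℤ) (m : ℕ) :
    ∑ i ∈ range m, (y (a + i + 1) - y (a + i)) = y (a + m) - y a := by
  simpa [add_assoc] using sum_range_sub (fun i : ℕ => y (a + i)) m

theorem StrictAntiOn.sub_mul_sub_pos {G : ℝ → ℝ} {s : Set ℝ} (hG : StrictAntiOn G s) {u v : ℝ}
    (hu : u ∈ s) (hv : v ∈ s) (huv : u ≠ v) : 0 < (G u - G v) * (v - u) := by
  rcases huv.lt_or_gt with h | h
  · exact mul_pos (sub_pos.2 (hG hu hv h)) (sub_pos.2 h)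
  · exact mul_pos_of_neg_of_neg (sub_neg.2 (hG hv hu h)) (sub_neg.2 h)

theorem StrictAntiOn.sub_mul_sub_nonneg {G : ℝ → ℝ} {s : Set ℝ} (hG : StrictAntiOn G s) {u v : ℝ}
    (hu : u ∈ s) (hv : v ∈ s) : 0 ≤ (G u - G v) * (v - u) := by
  rcases eq_or_ne u v with rfl | huv
  · simp
  · exact (hG.sub_mul_sub_pos hu hv huv).le

noncomputable def balancePotential (g : ℕ → ℤ → ℝ) (p : ℕ) (k : ℤ) : ℝ :=
  ∑ r ∈ range p, ∑ j ∈ range (r + 1), g r (k - j)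

theorem balancePotential_eq_balancePotential_zero {g : ℕ → ℤ → ℝ} {p : ℕ}
    (hbal : ∀ n, ∑ r ∈ range p, g r (n - (r + 1)) = ∑ r ∈ range p, g r n) (k : ℤ) :
    balancePotential g p k = balancePotential g p 0 := by
  have hstep : Periodic (balancePotential g p) 1 := fun n => by
    have hr : ∀ r : ℕ, ∑ j ∈ range (r + 1), g r (n + 1 - j) + g r (n + 1 - (r + 1))
        = ∑ j ∈ range (r + 1), g r (n - j) + g r (n + 1) := fun r => by
      rw [sum_range_succ', sum_range_succ]
      push_cast
      have e : ∀ m : ℤ, n + 1 - m - 1 = n - m := fun m => by ring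
      simp only [sub_zero, sub_add_eq_sub_sub, e]
      ring
    have := hbal (n + 1)
    have hsum := sum_congr rfl fun r (_ : r ∈ range p) => hr r
    simp only [sum_add_distrib] at hsum
    unfold balancePotential
    linarith
  simpa using hstep.int_mul_eq k

theorem sum_range_mul_shift {g u : ℤ → ℝ} {p : ℕ} (hg : Periodic g p) (hu : Periodic u p)
    (a j : ℤ) :
    ∑ i ∈ range p, g (a + i) * u (a + i + j) = ∑ i ∈ range p, g (a + i - j) * u (a + i) := by
  have hh : Periodic (fun n => g (n - j) * u n) p := fun n => by
    simp only [show n + (p : ℤ) - j = n - j + p by ring, hg (n - j), hu n]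
  have := (hh.sum_range_add (a + j)).trans (hh.sum_range_add a).symm
  simpa only [add_sub_cancel_right, add_right_comm a j] using this

theorem sum_sum_mul_sum_eq_sum_mul_balancePotential {g : ℕ → ℤ → ℝ} {u : ℤ → ℝ} {p : ℕ}
    (hg : ∀ r, Periodic (g r) p) (hu : Periodic u p) (a : ℤ) :
    ∑ i ∈ range p, ∑ r ∈ range p, g r (a + i) * ∑ j ∈ range (r + 1), u (a + i + j) =
      ∑ i ∈ range p, u (a + i) * balancePotential g p (a + i) := by
  simp only [balancePotential, mul_sum]
  calc ∑ i ∈ range p, ∑ r ∈ range p, ∑ j ∈ range (r + 1), g r (a + i) * u (a + i + j)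
      = ∑ r ∈ range p, ∑ j ∈ range (r + 1), ∑ i ∈ range p, g r (a + i) * u (a + i + j) := by
        rw [sum_comm]; exact sum_congr rfl fun r _ => sum_comm
    _ = ∑ r ∈ range p, ∑ j ∈ range (r + 1), ∑ i ∈ range p, g r (a + i - j) * u (a + i) := by
        simp only [sum_range_mul_shift (hg _) hu]
    _ = ∑ i ∈ range p, ∑ r ∈ range p, ∑ j ∈ range (r + 1), u (a + i) * g r (a + i - j) := by
        simp only [mul_comm (u _)]
        rw [sum_comm]; exact sum_congr rfl fun r _ => sum_comm

theorem add_mul_eq_of_add_period {a : ℕ → ℝ} {p : ℕ} {L : ℝ} (ha : ∀ m, a (m + p) = a m + L)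
    (q r : ℕ) : a (q * p + r) = q * L + a r := by
  induction q with
  | zero => simp
  | succ q ih =>
    rw [show (q + 1) * p + r = q * p + r + p by ring, ha, ih]
    push_cast; ring

noncomputable def periodizedForce (F : ℝ → ℝ) (L t : ℝ) : ℝ := ∑' q : ℕ, F (q * L + t)

section PeriodizedForce

variable {F : ℝ → ℝ} {L : ℝ} {a : ℕ → ℝ} {p : ℕ}

theorem summable_mul_add_of_add_period (ha : ∀ m, a (m + p) = a m + L)
    (hs : Summable (fun m => F (a m))) (hp : p ≠ 0) (r : ℕ) :
    Summable (fun q : ℕ => F (q * L + a r)) := by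
  have hinj : Injective (fun q : ℕ => q * p + r) := fun q₁ q₂ h => by simpa [hp] using h
  simpa [comp_def, add_mul_eq_of_add_period ha] using hs.comp_injective hinj

theorem tsum_eq_sum_range_periodizedForce (ha : ∀ m, a (m + p) = a m + L)
    (hs : Summable (fun m => F (a m))) (hp : p ≠ 0) :
    ∑' m, F (a m) = ∑ r ∈ range p, periodizedForce F L (a r) := by
  rw [tsum_eq_sum_range_tsum_mul_add hs hp]
  simp only [add_mul_eq_of_add_period ha, periodizedForce]

theorem summable_periodizedForce (hF0 : ∀ t, 0 < t → 0 ≤ F t) (hF : StrictAntiOn F (Ioi 0))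
    (hL : 0 < L) (hsum : Summable fun q : ℕ => F (q * L + L)) {t : ℝ} (ht : 0 < t) :
    Summable fun q : ℕ => F (q * L + t) := by
  rw [← summable_nat_add_iff 1]
  refine hsum.of_nonneg_of_le (fun q => hF0 _ (by positivity)) fun q => ?_
  have hq : (0 : ℝ) < q * L + L := by positivity
  push_cast
  exact (hF (mem_Ioi.2 hq) (mem_Ioi.2 (by positivity)) (by nlinarith)).le

theorem periodizedForce_strictAntiOn (hF : StrictAntiOn F (Ioi 0)) (hL : 0 ≤ L)
    (hsum : ∀ t, 0 < t → Summable fun q : ℕ => F (q * L + t)) :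
    StrictAntiOn (periodizedForce F L) (Ioi 0) := fun s hs t ht hst => by
  have hs' : ∀ q : ℕ, (0 : ℝ) < q * L + s := fun q => by have := mem_Ioi.1 hs; positivity
  refine (hsum t ht).tsum_lt_tsum (i := 0) (fun q => ?_) ?_ (hsum s hs)
  · exact (hF (mem_Ioi.2 (hs' q)) (mem_Ioi.2 (by linarith [hs' q])) (by linarith)).le
  · simpa using hF hs ht hst

end PeriodizedForce

def natEquivGT (n : ℤ) : ℕ ≃ {k : ℤ // n < k} where
  toFun m := ⟨n + (m + 1), by omega⟩
  invFun k := (k.1 - n - 1).toNat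
  left_inv m := by dsimp only; omega
  right_inv k := by ext; have := k.2; simp only [Int.ofNat_toNat]; omega

def natEquivLT (n : ℤ) : ℕ ≃ {k : ℤ // k < n} where
  toFun m := ⟨n - (m + 1), by omega⟩
  invFun k := (n - 1 - k.1).toNat
  left_inv m := by dsimp only; omega
  right_inv k := by ext; have := k.2; simp only [Int.ofNat_toNat]; omega

section Configuration

variable {F : ℝ → ℝ} {x : ℤ → ℝ} {p : ℕ} {L : ℝ}

theorem sub_gt_add_period (hper : ∀ n, x (n + p) = x n + L) (n : ℤ) (m : ℕ) :
    x (n + ((m + p : ℕ) + 1)) - x n = x (n + (m + 1)) - x n + L := by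
  rw [show n + ((m + p : ℕ) + 1 : ℤ) = n + (m + 1) + p by push_cast; ring, hper]
  ring

theorem sub_lt_add_period (hper : ∀ n, x (n + p) = x n + L) (n : ℤ) (m : ℕ) :
    x n - x (n - ((m + p : ℕ) + 1)) = x n - x (n - (m + 1)) + L := by
  rw [show n - ((m : ℤ) + 1) = n - ((m + p : ℕ) + 1) + p by push_cast; ring, hper]
  ring

theorem tsum_gt_eq_sum_range_periodizedForce (hper : ∀ n, x (n + p) = x n + L) (hp : p ≠ 0)
    {n : ℤ} (hs : Summable fun k : {k : ℤ // n < k} => F (x k - x n)) :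
    ∑' k : {k : ℤ // n < k}, F (x k - x n) =
      ∑ r ∈ range p, periodizedForce F L (x (n + (r + 1)) - x n) := by
  rw [← (natEquivGT n).tsum_eq]
  exact tsum_eq_sum_range_periodizedForce (sub_gt_add_period hper n)
    ((natEquivGT n).summable_iff.2 hs) hp

theorem tsum_lt_eq_sum_range_periodizedForce (hper : ∀ n, x (n + p) = x n + L) (hp : p ≠ 0)
    {n : ℤ} (hs : Summable fun k : {k : ℤ // k < n} => F (x n - x k)) :
    ∑' k : {k : ℤ // k < n}, F (x n - x k) =
      ∑ r ∈ range p, periodizedForce F L (x n - x (n - (r + 1))) := by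
  rw [← (natEquivLT n).tsum_eq]
  exact tsum_eq_sum_range_periodizedForce (sub_lt_add_period hper n)
    ((natEquivLT n).summable_iff.2 hs) hp

theorem summable_mul_add_of_summable_gt (hper : ∀ n, x (n + p) = x n + L) (hp : p ≠ 0)
    (hs : Summable fun k : {k : ℤ // 0 < k} => F (x k - x 0)) :
    Summable fun q : ℕ => F (q * L + L) := by
  have h := summable_mul_add_of_add_period (a := fun m : ℕ => x (0 + (m + 1)) - x 0)
    (sub_gt_add_period hper 0) ((natEquivGT 0).summable_iff.2 hs) hp (p - 1)
  have hL : x (0 + ((p - 1 : ℕ) + 1)) - x 0 = L := by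
    rw [show (0 : ℤ) + ((p - 1 : ℕ) + 1) = 0 + p by omega, hper, add_sub_cancel_left]
  rwa [hL] at h

theorem sum_range_sub_of_add_period (hper : ∀ n, x (n + p) = x n + L) (s : ℕ) (a : ℤ) :
    ∑ i ∈ range p, (x (a + i + s) - x (a + i)) = s * L := by
  calc ∑ i ∈ range p, (x (a + i + s) - x (a + i))
      = ∑ i ∈ range p, ∑ j ∈ range s, (x (a + i + j + 1) - x (a + i + j)) := by
        simp only [sum_range_sub_int]
    _ = ∑ j ∈ range s, ∑ i ∈ range p, (x (a + j + i + 1) - x (a + j + i)) := by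
        rw [sum_comm]; simp only [add_right_comm a]
    _ = s * L := by
        simp only [sum_range_sub_int, hper, add_sub_cancel_left, sum_const, card_range,
          nsmul_eq_mul]

theorem sum_range_sub_sub_eq_zero (hper : ∀ n, x (n + p) = x n + L) (hp : p ≠ 0) (r : ℕ)
    (a : ℤ) : ∑ i ∈ range p, (x (a + i + (r + 1)) - x (a + i) - (r + 1) * (L / p)) = 0 := by
  have h := sum_range_sub_of_add_period hper (r + 1) a
  push_cast at h
  rw [sum_sub_distrib, h, sum_const, card_range, nsmul_eq_mul]
  field_simp
  ring

theorem sum_sum_mul_sub_sub_eq_zero_of_balanced {G : ℝ → ℝ} (hp : p ≠ 0)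
    (hper : ∀ n, x (n + p) = x n + L)
    (hbal : ∀ n, ∑ r ∈ range p, G (x n - x (n - (r + 1))) =
      ∑ r ∈ range p, G (x (n + (r + 1)) - x n)) (k : ℤ) :
    ∑ i ∈ range p, ∑ r ∈ range p, G (x (k + i + (r + 1)) - x (k + i)) *
      (x (k + i + (r + 1)) - x (k + i) - (r + 1) * (L / p)) = 0 := by
  let g : ℕ → ℤ → ℝ := fun r n => G (x (n + (r + 1)) - x n)
  let u : ℤ → ℝ := fun n => x (n + 1) - x n - L / p
  have hg : ∀ r, Periodic (g r) p := fun r n => by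
    simp only [g, show n + p + (r + 1) = n + (r + 1) + p by ring, hper]
    ring_nf
  have hu : Periodic u p := fun n => by
    simp only [u, show n + p + 1 = n + 1 + p by ring, hper]
    ring
  have hu_sum : ∑ i ∈ range p, u (k + i) = 0 := by
    simpa only [Nat.cast_zero, zero_add, one_mul] using sum_range_sub_sub_eq_zero hper hp 0 k
  have hdiff : ∀ (r : ℕ) n,
      x (n + (r + 1)) - x n - (r + 1) * (L / p) = ∑ j ∈ range (r + 1), u (n + j) := fun r n => by
    simp only [u]
    rw [sum_sub_distrib, sum_range_sub_int, sum_const, card_range, nsmul_eq_mul]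
    push_cast
    ring_nf
  have hD : ∀ n, balancePotential g p n = balancePotential g p 0 :=
    balancePotential_eq_balancePotential_zero fun n => by simpa [g] using hbal n
  simp only [hdiff]
  rw [sum_sum_mul_sum_eq_sum_mul_balancePotential hg hu]
  simp only [hD, ← sum_mul, hu_sum, zero_mul]

theorem sub_eq_of_balanced {G : ℝ → ℝ} (hG : StrictAntiOn G (Ioi 0)) (hx : StrictMono x)
    (hp : p ≠ 0) (hper : ∀ n, x (n + p) = x n + L)
    (hbal : ∀ n, ∑ r ∈ range p, G (x n - x (n - (r + 1))) =
      ∑ r ∈ range p, G (x (n + (r + 1)) - x n)) (k : ℤ) :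
    x (k + 1) - x k = L / p := by
  have hL : 0 < L := by
    have := hper 0
    rw [zero_add] at this
    linarith [hx (show (0 : ℤ) < p by omega)]
  have hgap_pos : ∀ (n : ℤ) (r : ℕ), 0 < x (n + (r + 1)) - x n :=
    fun n r => sub_pos.2 (hx (by omega))
  have hmean : ∑ i ∈ range p, ∑ r ∈ range p, G ((r + 1) * (L / p)) *
      (x (k + i + (r + 1)) - x (k + i) - (r + 1) * (L / p)) = 0 := by
    rw [sum_comm]
    exact sum_eq_zero fun r _ => by rw [← mul_sum, sum_range_sub_sub_eq_zero hper hp, mul_zero]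
  have hterm_nonneg : ∀ i ∈ range p, ∀ r ∈ range p,
      0 ≤ (G ((r + 1) * (L / p)) - G (x (k + i + (r + 1)) - x (k + i))) *
        (x (k + i + (r + 1)) - x (k + i) - (r + 1) * (L / p)) :=
    fun i _ r _ => hG.sub_mul_sub_nonneg (mem_Ioi.2 (by positivity)) (hgap_pos _ r)
  have htotal : ∑ i ∈ range p, ∑ r ∈ range p,
      (G ((r + 1) * (L / p)) - G (x (k + i + (r + 1)) - x (k + i))) *
        (x (k + i + (r + 1)) - x (k + i) - (r + 1) * (L / p)) = 0 := by
    simp only [sub_mul, sum_sub_distrib, hmean,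
      sum_sum_mul_sub_sub_eq_zero_of_balanced hp hper hbal, sub_zero]
  have h0 : 0 ∈ range p := mem_range.2 (Nat.pos_of_ne_zero hp)
  have hrow := (sum_eq_zero_iff_of_nonneg fun i hi => sum_nonneg (hterm_nonneg i hi)).1 htotal 0 h0
  have hterm := (sum_eq_zero_iff_of_nonneg (hterm_nonneg 0 h0)).1 hrow 0 h0
  simp only [Nat.cast_zero, zero_add, add_zero, one_mul] at hterm
  by_contra hne
  exact (hG.sub_mul_sub_pos (mem_Ioi.2 (by positivity)) (mem_Ioi.2 (sub_pos.2 (hx (lt_add_one k))))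
    (Ne.symm hne)).ne' hterm

end Configuration

/-- Every periodic equilibrium configuration is trivial. -/
theorem stmt_2 (F : ℝ → ℝ)
    (hFpos : ∀ d, 0 < d → 0 < F d)
    (hFanti : ∀ a b, 0 < a → a < b → F b < F a)
    (x : ℤ → ℝ) (hx : StrictMono x)
    (hsumL : ∀ n : ℤ, Summable (fun k : {k : ℤ // k < n} => F (x n - x k.1)))
    (hsumR : ∀ n : ℤ, Summable (fun k : {k : ℤ // n < k} => F (x k.1 - x n)))
    (heq : ∀ n : ℤ,
      (∑' k : {k : ℤ // k < n}, F (x n - x k.1)) =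
      (∑' k : {k : ℤ // n < k}, F (x k.1 - x n)))
    (p : ℕ) (hp : 1 ≤ p) (L : ℝ) (hL : 0 < L)
    (hper : ∀ n : ℤ, x (n + (p : ℤ)) = x n + L) :
    ∀ k : ℤ, x (k + 1) - x k = x 1 - x 0 := by
  have hp0 : p ≠ 0 := by omega
  have hF : StrictAntiOn F (Ioi 0) := fun a ha b _ hab => hFanti a b ha hab
  have hsumF : ∀ t, 0 < t → Summable fun q : ℕ => F (q * L + t) :=
    fun _ => summable_periodizedForce (fun t ht => (hFpos t ht).le) hF hL
      (summable_mul_add_of_summable_gt hper hp0 (hsumR 0))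
  have hbal : ∀ n, ∑ r ∈ range p, periodizedForce F L (x n - x (n - (r + 1))) =
      ∑ r ∈ range p, periodizedForce F L (x (n + (r + 1)) - x n) := fun n => by
    rw [← tsum_lt_eq_sum_range_periodizedForce hper hp0 (hsumL n),
      ← tsum_gt_eq_sum_range_periodizedForce hper hp0 (hsumR n), heq n]
  have hgap := sub_eq_of_balanced (periodizedForce_strictAntiOn hF hL.le hsumF) hx hp0 hper hbal
  intro k
  rw [hgap k, ← hgap 0, zero_add]
end

section
/- Let n ≥ 2 particles sit at distinct points x_1, …, x_n on the unit circle S¹ (in cyclic order), and suppose each particle is in equilibrium under the tangential components of pairwise forces, where the force magnitude between two particles is F(d) for their (arc-length) distance d, with F strictly decreasing and positive. Then the arc-length distance between consecutive particles d(x_i, x_{i+1 mod n}) is the same for all i (equal to 2π/n). -/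
/-!
Unroll the particles to an increasing sequence `Θ : ℤ → ℝ` with `Θ (k + n) = Θ k + 2π` and
consider the `n`-periodic deviation `u k = Θ k - 2πk/n` from equal spacing. At a minimum `i`
of `u`, every backward gap `Θ i - Θ (i - k)` is at most the forward gap `Θ (i + k) - Θ i`.
The signed force is strictly increasing in the displacement on `(0, 2π)` and changes sign
under `δ ↦ 2π - δ`, so pairing the particle `i + k` with `i + (n - k) = i - k + n` turns the
balance at `i` into a sum of nonnegative terms `f (forward) - f (backward)` that vanishes.
Hence all pairs are equal, in particular `u (i - 1) = u i`: the minimizers of `u` are closed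
under `i ↦ i - 1`, so `u` is constant.
-/

open Real

/-- The signed tangential force exerted on a particle by another particle lying at
angular displacement `δ ∈ (0, 2π)` counterclockwise from it: the particle is pushed
along the shorter arc away from the other particle. -/
noncomputable def tangForce (F : ℝ → ℝ) (δ : ℝ) : ℝ :=
  if δ < π then -F δ else if π < δ then F (2 * π - δ) else 0

/-- The angular displacement in `(0, 2π)` from `a` to `b`, for angles `a ≠ b` in `[0, 2π)`. -/
noncomputable def angDisp (a b : ℝ) : ℝ :=
  if a < b then b - a else b - a + 2 * π

open Finset Function

section Periodic

variable {α : Type*} [LinearOrder α] {u : ℤ → α} {c : ℤ}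

lemma Function.Periodic.exists_forall_le (h : Periodic u c) (hc : 0 < c) :
    ∃ i, ∀ k, u i ≤ u k := by
  obtain ⟨i, -, hi⟩ := (Finset.Ico 0 c).exists_min_image u ⟨0, by simpa using hc⟩
  refine ⟨i, fun k => ?_⟩
  obtain ⟨y, hy, hky⟩ := h.exists_mem_Ico₀ hc k
  exact hky ▸ hi y (by simpa using hy)

lemma Function.Periodic.apply_eq_apply_of_isMin_sub_one (h : Periodic u c) (hc : 0 < c)
    (hpred : ∀ i, (∀ k, u i ≤ u k) → u (i - 1) = u i) (k j : ℤ) : u k = u j := by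
  obtain ⟨i, hi⟩ := h.exists_forall_le hc
  have below : ∀ m ≤ i, u m = u i := by
    intro m hm
    induction m, hm using Int.leInductionDown with
    | base => rfl
    | pred m _ ih => exact (hpred m (ih ▸ hi)).trans ih
  have all : ∀ m, u m = u i := fun m => by
    obtain ⟨y, hy, hmy⟩ := h.exists_mem_Ioc hc m (i - c)
    exact hmy.trans (below y (by linarith [hy.2]))
  rw [all k, all j]

end Periodic

section Balance

variable {f : ℝ → ℝ} {L : ℝ} {n : ℕ} {Θ : ℤ → ℝ}

noncomputable def deviation (Θ : ℤ → ℝ) (L : ℝ) (n : ℕ) (k : ℤ) : ℝ :=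
  Θ k - L / n * k

lemma deviation_periodic (hn : n ≠ 0) (hper : ∀ k, Θ (k + n) = Θ k + L) :
    Periodic (deviation Θ L n) n := fun k => by
  simp only [deviation, hper, Int.cast_add, Int.cast_natCast]
  field_simp
  ring

lemma sub_mem_Ioo_of_lt_of_lt_add (hΘ : StrictMono Θ) (hper : ∀ k, Θ (k + n) = Θ k + L)
    {a b : ℤ} (hab : a < b) (hba : b < a + n) : Θ b - Θ a ∈ Set.Ioo 0 L := by
  have := hΘ hba
  rw [hper] at this
  exact ⟨sub_pos.2 (hΘ hab), by linarith⟩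

lemma sum_Ico_sub_eq_zero_of_sum_Ico_add (hflip : ∀ x, f (L - x) = -f x)
    (hper : ∀ k, Θ (k + n) = Θ k + L) {i : ℤ}
    (hbal : ∑ k ∈ Ico 1 n, f (Θ (i + k) - Θ i) = 0) :
    ∑ k ∈ Ico 1 n, f (Θ i - Θ (i - k)) = 0 := by
  have hreflect := sum_Ico_reflect (fun k : ℕ => f (Θ (i + k) - Θ i)) 1 n.le_succ
  rw [Nat.add_sub_cancel_left, Nat.add_sub_cancel] at hreflect
  rw [← hreflect] at hbal
  rw [← neg_eq_zero, ← sum_neg_distrib, ← hbal]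
  refine sum_congr rfl fun k hk => ?_
  have : i + ((n - k : ℕ) : ℤ) = i - k + n := by
    have := (mem_Ico.1 hk).2
    omega
  rw [this, hper, ← hflip]
  congr 1
  ring

lemma deviation_sub_one_eq_of_isMin (hf : StrictMonoOn f (Set.Ioo 0 L))
    (hflip : ∀ x, f (L - x) = -f x) (hΘ : StrictMono Θ) (hper : ∀ k, Θ (k + n) = Θ k + L)
    (hn : 1 < n) {i : ℤ} (hbal : ∑ k ∈ Ico 1 n, f (Θ (i + k) - Θ i) = 0)
    (hmin : ∀ k, deviation Θ L n i ≤ deviation Θ L n k) :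
    deviation Θ L n (i - 1) = deviation Θ L n i := by
  have hsecond : ∀ k : ℤ, (Θ (i + k) - Θ i) - (Θ i - Θ (i - k)) =
      deviation Θ L n (i + k) + deviation Θ L n (i - k) - 2 * deviation Θ L n i := by
    intro k
    simp only [deviation, Int.cast_add, Int.cast_sub]
    ring
  have hfwd : ∀ k ∈ Ico 1 n, Θ (i + k) - Θ i ∈ Set.Ioo 0 L := fun k hk => by
    have := mem_Ico.1 hk
    exact sub_mem_Ioo_of_lt_of_lt_add hΘ hper (by omega) (by omega)
  have hbwd : ∀ k ∈ Ico 1 n, Θ i - Θ (i - k) ∈ Set.Ioo 0 L := fun k hk => by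
    have := mem_Ico.1 hk
    exact sub_mem_Ioo_of_lt_of_lt_add hΘ hper (by omega) (by omega)
  have hgap : ∀ k ∈ Ico 1 n, f (Θ i - Θ (i - k)) ≤ f (Θ (i + k) - Θ i) := fun k hk =>
    hf.monotoneOn (hbwd k hk) (hfwd k hk) <| by
      linarith [hsecond k, hmin (i + k), hmin (i - k)]
  have hsum : ∑ k ∈ Ico 1 n, (f (Θ (i + k) - Θ i) - f (Θ i - Θ (i - k))) = 0 := by
    rw [sum_sub_distrib, hbal, sum_Ico_sub_eq_zero_of_sum_Ico_add hflip hper hbal, sub_zero]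
  have h1 : (1 : ℕ) ∈ Ico 1 n := mem_Ico.2 ⟨le_rfl, hn⟩
  have hf1 := (sum_eq_zero_iff_of_nonneg fun k hk => sub_nonneg.2 (hgap k hk)).1 hsum 1 h1
  have hgap1 := hf.injOn (hfwd 1 h1) (hbwd 1 h1) (sub_eq_zero.1 hf1)
  have := hsecond 1
  push_cast at hgap1 this
  linarith [hmin (i + 1), hmin (i - 1)]

theorem sub_eq_div_of_sum_Ico_eq_zero (hf : StrictMonoOn f (Set.Ioo 0 L))
    (hflip : ∀ x, f (L - x) = -f x) (hΘ : StrictMono Θ) (hper : ∀ k, Θ (k + n) = Θ k + L)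
    (hn : n ≠ 0) (hbal : ∀ i, ∑ k ∈ Ico 1 n, f (Θ (i + k) - Θ i) = 0) (k : ℤ) :
    Θ (k + 1) - Θ k = L / n := by
  have hperiodic := deviation_periodic hn hper
  have hconst := hperiodic.apply_eq_apply_of_isMin_sub_one (by omega) fun i hi => by
    obtain rfl | hn1 := (Nat.one_le_iff_ne_zero.2 hn).eq_or_lt
    · simpa using (hperiodic (i - 1)).symm
    · exact deviation_sub_one_eq_of_isMin hf hflip hΘ hper hn1 (hbal i) hi
  have := hconst (k + 1) k
  simp only [deviation, Int.cast_add, Int.cast_one] at this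
  linear_combination this

end Balance

section Circle

lemma tangForce_two_pi_sub (F : ℝ → ℝ) (x : ℝ) :
    tangForce F (2 * π - x) = -tangForce F x := by
  unfold tangForce
  split_ifs <;> first | (exfalso; linarith) | simp

lemma tangForce_strictMonoOn {F : ℝ → ℝ} (hFpos : ∀ d, 0 < d → 0 < F d)
    (hFanti : ∀ a b, 0 < a → a < b → F b < F a) :
    StrictMonoOn (tangForce F) (Set.Ioo 0 (2 * π)) := by
  rintro a ⟨ha0, ha⟩ b ⟨hb0, hb⟩ hab
  unfold tangForce
  split_ifs <;>
    linarith [hFanti a b ha0 hab, hFanti (2 * π - b) (2 * π - a) (by linarith) (by linarith),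
      hFpos a ha0, hFpos (2 * π - b) (by linarith)]

variable {θ : ℕ → ℝ} {n : ℕ}

noncomputable def liftAngles (θ : ℕ → ℝ) (n : ℕ) (k : ℤ) : ℝ :=
  θ (k % n).toNat + 2 * π * (k / n : ℤ)

lemma liftAngles_add_mul_of_lt (hn : n ≠ 0) {r : ℤ} (hr0 : 0 ≤ r) (hrn : r < n) (q : ℤ) :
    liftAngles θ n (r + n * q) = θ r.toNat + 2 * π * q := by
  rw [liftAngles, Int.add_mul_emod_self_left, Int.emod_eq_of_lt hr0 hrn,
    Int.add_mul_ediv_left _ _ (by exact_mod_cast hn), Int.ediv_eq_zero_of_lt hr0 hrn, zero_add]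

lemma liftAngles_natCast (hn : n ≠ 0) {a : ℕ} (ha : a < n) : liftAngles θ n a = θ a := by
  simpa using liftAngles_add_mul_of_lt (θ := θ) hn a.cast_nonneg (by exact_mod_cast ha) 0

lemma liftAngles_add_mul (hn : n ≠ 0) (k q : ℤ) :
    liftAngles θ n (k + n * q) = liftAngles θ n k + 2 * π * q := by
  have hr0 : 0 ≤ k % n := Int.emod_nonneg k (by exact_mod_cast hn)
  have hrn : k % n < n := Int.emod_lt_of_pos k (by omega)
  rw [← Int.emod_add_mul_ediv k n, add_assoc, ← mul_add, liftAngles_add_mul_of_lt hn hr0 hrn,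
    liftAngles_add_mul_of_lt hn hr0 hrn]
  push_cast
  ring

lemma liftAngles_add_n (hn : n ≠ 0) (k : ℤ) :
    liftAngles θ n (k + n) = liftAngles θ n k + 2 * π := by
  simpa using liftAngles_add_mul (θ := θ) hn k 1

lemma liftAngles_add_sub_liftAngles_emod (hn : n ≠ 0) (i k : ℤ) :
    liftAngles θ n (i + k) - liftAngles θ n i =
      liftAngles θ n (i % n + k) - liftAngles θ n (i % n) := by
  conv_lhs => rw [← Int.emod_add_mul_ediv i n, add_right_comm, liftAngles_add_mul hn,
    liftAngles_add_mul hn]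
  ring

lemma liftAngles_strictMono (hn : n ≠ 0) (hrange : ∀ i < n, θ i ∈ Set.Ico 0 (2 * π))
    (hsorted : ∀ i j, i < j → j < n → θ i < θ j) : StrictMono (liftAngles θ n) := by
  refine strictMono_int_of_lt_succ fun k => ?_
  have hr0 : 0 ≤ k % n := Int.emod_nonneg k (by exact_mod_cast hn)
  have hrn : k % n < n := Int.emod_lt_of_pos k (by omega)
  rw [← Int.emod_add_mul_ediv k n, liftAngles_add_mul_of_lt hn hr0 hrn]
  obtain hlt | hwrap := (Int.add_one_le_of_lt hrn).lt_or_eq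
  · rw [add_right_comm, liftAngles_add_mul_of_lt hn (by omega) hlt]
    have := hsorted (k % n).toNat (k % n + 1).toNat (by omega) (by omega)
    linarith
  · have : k % n + n * (k / n) + 1 = 0 + n * (k / n + 1) := by linear_combination hwrap
    rw [this, liftAngles_add_mul_of_lt hn le_rfl (by omega)]
    have := (hrange (k % n).toNat (by omega)).2
    have := (hrange 0 (by omega)).1
    push_cast
    linarith

lemma sum_erase_angDisp_eq_sum_Ico {M : Type*} [AddCommMonoid M] (g : ℝ → M) (hn : n ≠ 0)
    (hsorted : ∀ i j, i < j → j < n → θ i < θ j) {i : ℕ} (hi : i < n) :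
    ∑ j ∈ (range n).erase i, g (angDisp (θ i) (θ j)) =
      ∑ k ∈ Ico 1 n, g (liftAngles θ n (i + k) - liftAngles θ n i) := by
  symm
  refine sum_nbij' (fun k => if i + k < n then i + k else i + k - n)
    (fun j => if i < j then j - i else j + n - i) ?_ ?_ ?_ ?_ ?_
  · intro k hk
    simp only [mem_Ico] at hk
    simp only [mem_erase, mem_range]
    split_ifs <;> omega
  · intro j hj
    simp only [mem_erase, mem_range] at hj
    simp only [mem_Ico]
    split_ifs <;> omega
  · intro k hk
    simp only [mem_Ico] at hk
    split_ifs <;> omega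
  · intro j hj
    simp only [mem_erase, mem_range] at hj
    split_ifs <;> omega
  · intro k hk
    simp only [mem_Ico] at hk
    rw [liftAngles_natCast hn hi]
    split_ifs with hwrap
    · rw [angDisp, if_pos (hsorted i (i + k) (by omega) hwrap), ← Nat.cast_add,
        liftAngles_natCast hn hwrap]
    · have hlt : i + k - n < i := by omega
      rw [angDisp, if_neg (hsorted _ _ hlt hi).not_gt,
        show (i : ℤ) + k = ((i + k - n : ℕ) : ℤ) + n by omega, liftAngles_add_n hn,
        liftAngles_natCast hn (hlt.trans hi), sub_add_eq_add_sub]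

end Circle

/-- `n ≥ 2` particles on the unit circle, in cyclic order, in equilibrium under
pairwise tangential forces of magnitude `F` of the arc-length distance, are equally
spaced: every gap between consecutive particles equals `2π/n`. -/
theorem stmt_3 (F : ℝ → ℝ)
    (hFpos : ∀ d, 0 < d → 0 < F d)
    (hFanti : ∀ a b, 0 < a → a < b → F b < F a)
    (n : ℕ) (hn : 2 ≤ n) (θ : ℕ → ℝ)
    (hrange : ∀ i < n, θ i ∈ Set.Ico 0 (2 * π))
    (hsorted : ∀ i j, i < j → j < n → θ i < θ j)
    (heq : ∀ i < n, ∑ j ∈ (Finset.range n).erase i, tangForce F (angDisp (θ i) (θ j)) = 0) :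
    (∀ i, i + 1 < n → θ (i + 1) - θ i = 2 * π / n) ∧
      θ 0 + 2 * π - θ (n - 1) = 2 * π / n := by
  have hn0 : n ≠ 0 := by omega
  have hbal : ∀ i : ℤ, ∑ k ∈ Ico 1 n,
      tangForce F (liftAngles θ n (i + k) - liftAngles θ n i) = 0 := fun i => by
    obtain ⟨r, hr⟩ := Int.eq_ofNat_of_zero_le (Int.emod_nonneg i (Int.natCast_ne_zero.2 hn0))
    have hrn : r < n := by have := Int.emod_lt_of_pos i (by omega : (0 : ℤ) < n); omega
    simp_rw [liftAngles_add_sub_liftAngles_emod hn0 i, hr,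
      ← sum_erase_angDisp_eq_sum_Ico _ hn0 hsorted hrn, heq r hrn]
  have hgap := sub_eq_div_of_sum_Ico_eq_zero (tangForce_strictMonoOn hFpos hFanti)
    (tangForce_two_pi_sub F) (liftAngles_strictMono hn0 hrange hsorted)
    (liftAngles_add_n hn0) hn0 hbal
  refine ⟨fun i hi => ?_, ?_⟩
  · have := hgap i
    rwa [← Nat.cast_succ, liftAngles_natCast hn0 hi, liftAngles_natCast hn0 (by omega)] at this
  · obtain ⟨m, rfl⟩ := Nat.exists_eq_add_one_of_ne_zero hn0
    have := hgap m
    rw [show (m : ℤ) + 1 = ((0 : ℕ) : ℤ) + ((m + 1 : ℕ) : ℤ) by push_cast; ring,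
      liftAngles_add_n hn0, liftAngles_natCast hn0 (by omega),
      liftAngles_natCast hn0 (by omega)] at this
    rw [Nat.add_sub_cancel]
    linarith
end

section
/- Let X and Y be uniformly discrete subsets of (−∞, 0), and let W = {0 = w_0 < w_1 < w_2 < …} ⊆ [0, ∞) satisfy c ≤ w_n − w_{n−1} ≤ C for all n ≥ 1 with constants 0 < c ≤ C. Suppose that for every w ∈ W, ∑_{x ∈ X} 1/(x − w)² = ∑_{y ∈ Y} 1/(y − w)². Then X = Y. -/
/-!
Let `a` be the largest point of the symmetric difference of `X` and `Y` (it exists because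
uniformly discrete sets are closed), say `a ∈ X \ Y`. Above `a` the two configurations agree,
so the fields of `X ∩ (-∞, a]` and `Y ∩ (-∞, a]` still coincide at the points `wₙ`. Their
difference `g z = ∑ₓ (z - x)⁻² - ∑ᵧ (z - y)⁻²` is holomorphic on `Re z > a` and bounded on
each half-plane `Re z ≥ α > a`. Dividing `g` by `∏ (z - wᵢ)` and applying the maximum principle
on large half-discs gives `‖g t‖ ≤ B ∏ (wᵢ - t) / (wᵢ - α)`, which tends to `0` because
`wᵢ ≤ C i` makes `∑ 1 / wᵢ` diverge. Hence `g` vanishes on `(a, 0)`, which is impossible since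
the term `(t - a)⁻²` of the charge at `a` blows up as `t ↓ a`.
-/

open Set Filter Topology

section Separated

variable {S : Set ℝ} {c : ℝ}

lemma isClosed_of_pairwise_le_abs_sub (hc : 0 < c) (hS : S.Pairwise fun x y => c ≤ |x - y|) :
    IsClosed S :=
  Metric.isClosed_of_pairwise_le_dist hc (by simpa only [Real.dist_eq] using hS)

lemma summable_inv_sq_sub_of_le (hc : 0 < c) (hS : S.Pairwise fun x y => c ≤ |x - y|)
    {m r : ℝ} (hm : ∀ p ∈ S, p ≤ m) (hmr : m < r) :
    Summable fun p : S => ((r - p) ^ 2)⁻¹ := by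
  -- two points in the same block `(m - (k + 1) c, m - k c]` would be closer than `c`
  set e : S → ℕ := fun p => ⌊(m - p) / c⌋₊
  have hquot_nonneg (p : S) : 0 ≤ (m - p) / c := div_nonneg (sub_nonneg.2 (hm p p.2)) hc.le
  have he_inj : e.Injective := by
    intro p p' hpp'
    by_contra hne
    have hfloor : ⌊(m - p) / c⌋ = ⌊(m - p') / c⌋ := by
      rw [← Int.natCast_floor_eq_floor (hquot_nonneg p),
        ← Int.natCast_floor_eq_floor (hquot_nonneg p')]
      exact congrArg _ hpp'
    have hclose := Int.abs_sub_lt_one_of_floor_eq_floor hfloor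
    rw [← sub_div, sub_sub_sub_cancel_left, abs_div, abs_of_pos hc, div_lt_one hc] at hclose
    exact (hS p.2 p'.2 (Subtype.coe_ne_coe.2 hne)).not_gt (by rwa [abs_sub_comm])
  set k := min (r - m) c
  have hk : 0 < k := lt_min (sub_pos.2 hmr) hc
  have hbound (p : S) : k * (e p + 1) ≤ r - p := by
    have hfl : c * e p ≤ m - p := (le_div_iff₀' hc).1 (Nat.floor_le (hquot_nonneg p))
    have : k * e p ≤ c * e p := mul_le_mul_of_nonneg_right (min_le_right _ _) (Nat.cast_nonneg _)
    nlinarith [min_le_left (r - m) c]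
  have hsq : Summable fun n : ℕ => (k ^ 2)⁻¹ * (((n + 1 : ℕ) : ℝ) ^ 2)⁻¹ :=
    ((summable_nat_add_iff 1).2 (Real.summable_nat_pow_inv.2 one_lt_two)).mul_left _
  refine (hsq.comp_injective he_inj).of_nonneg_of_le (fun p => by positivity) fun p => ?_
  rw [Function.comp_apply, ← mul_inv, ← mul_pow, Nat.cast_succ]
  exact inv_anti₀ (by positivity) (pow_le_pow_left₀ (by positivity) (hbound p) 2)

lemma exists_isGreatest_of_pairwise_le_abs_sub (hc : 0 < c)
    (hS : S.Pairwise fun x y => c ≤ |x - y|) (hne : S.Nonempty) (hbdd : BddAbove S) :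
    ∃ m, IsGreatest S m :=
  ⟨_, (isClosed_of_pairwise_le_abs_sub hc hS).isGreatest_csSup hne hbdd⟩

lemma summable_inv_sq_sub (hc : 0 < c) (hS : S.Pairwise fun x y => c ≤ |x - y|)
    {r : ℝ} (hr : ∀ p ∈ S, p < r) :
    Summable fun p : S => ((r - p) ^ 2)⁻¹ := by
  rcases S.eq_empty_or_nonempty with rfl | hne
  · exact summable_empty
  obtain ⟨m, hmS, hm⟩ := exists_isGreatest_of_pairwise_le_abs_sub hc hS hne
    ⟨r, fun p hp => (hr p hp).le⟩
  exact summable_inv_sq_sub_of_le hc hS hm (hr m hmS)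

lemma tsum_inv_sq_sub_eq_add (hc : 0 < c) (hS : S.Pairwise fun x y => c ≤ |x - y|)
    {r : ℝ} (hr : ∀ p ∈ S, p < r) (a : ℝ) :
    ∑' p : S, ((r - p) ^ 2)⁻¹ =
      ∑' p : ↥(S ∩ Iic a), ((r - p) ^ 2)⁻¹ + ∑' p : ↥(S ∩ Ioi a), ((r - p) ^ 2)⁻¹ := by
  have hsummable (T : Set ℝ) (hT : T ⊆ S) : Summable fun p : T => ((r - p) ^ 2)⁻¹ :=
    summable_inv_sq_sub hc (hS.mono hT) fun p hp => hr p (hT hp)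
  have hdisj : Disjoint (S ∩ Iic a) (S ∩ Ioi a) :=
    (Iic_disjoint_Ioi le_rfl).mono inter_subset_right inter_subset_right
  conv_lhs => rw [← inter_univ S, ← Iic_union_Ioi (a := a), inter_union_distrib_left]
  exact Summable.tsum_union_disjoint (f := fun p : ℝ => ((r - p) ^ 2)⁻¹) hdisj
    (hsummable _ inter_subset_left) (hsummable _ inter_subset_left)

end Separated

lemma tsum_inv_sq_sub_inter_Iic_eq {X Y : Set ℝ} {cX cY : ℝ}
    (hcX : 0 < cX) (hX : X.Pairwise fun x y => cX ≤ |x - y|)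
    (hcY : 0 < cY) (hY : Y.Pairwise fun x y => cY ≤ |x - y|)
    {a r : ℝ} (hXr : ∀ p ∈ X, p < r) (hYr : ∀ p ∈ Y, p < r) (hagree : X ∩ Ioi a = Y ∩ Ioi a)
    (h : ∑' p : X, ((r - p) ^ 2)⁻¹ = ∑' p : Y, ((r - p) ^ 2)⁻¹) :
    ∑' p : ↥(X ∩ Iic a), ((r - p) ^ 2)⁻¹ = ∑' p : ↥(Y ∩ Iic a), ((r - p) ^ 2)⁻¹ := by
  rwa [tsum_inv_sq_sub_eq_add hcX hX hXr a, tsum_inv_sq_sub_eq_add hcY hY hYr a, hagree,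
    add_left_inj] at h

lemma exists_tsum_inv_sq_sub_lt {X Y : Set ℝ} {cX cY : ℝ}
    (hcX : 0 < cX) (hX : X.Pairwise fun x y => cX ≤ |x - y|)
    (hcY : 0 < cY) (hY : Y.Pairwise fun x y => cY ≤ |x - y|)
    {a b : ℝ} (haX : a ∈ X) (hXa : ∀ p ∈ X, p ≤ a) (hYa : ∀ p ∈ Y, p < a) (hab : a < b) :
    ∃ t ∈ Ioo a b, ∑' p : Y, ((t - p) ^ 2)⁻¹ < ∑' p : X, ((t - p) ^ 2)⁻¹ := by
  set K := ∑' p : Y, ((a - p) ^ 2)⁻¹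
  have hK : 0 ≤ K := tsum_nonneg fun p => by positivity
  set ε := min ((b - a) / 2) (K + 1)⁻¹
  have hε : 0 < ε := lt_min (by linarith) (by positivity)
  have hεK : ε ≤ (K + 1)⁻¹ := min_le_right _ _
  have hε1 : ε ≤ 1 := hεK.trans (inv_le_one_of_one_le₀ (by linarith))
  refine ⟨a + ε, ⟨by linarith, by linarith [min_le_left ((b - a) / 2) (K + 1)⁻¹]⟩, ?_⟩
  have hY_le : ∑' p : Y, ((a + ε - p) ^ 2)⁻¹ ≤ K := by
    refine (summable_inv_sq_sub hcY hY fun p hp => (hYa p hp).trans (by linarith)).tsum_le_tsum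
      (fun p => ?_) (summable_inv_sq_sub hcY hY hYa)
    have := hYa p p.2
    exact inv_anti₀ (by nlinarith) (by nlinarith)
  have hK_lt : K < (ε ^ 2)⁻¹ := by
    have : ε ^ 2 ≤ (K + 1)⁻¹ := by nlinarith
    calc K < K + 1 := by linarith
      _ ≤ (ε ^ 2)⁻¹ := by rw [← inv_inv (K + 1)]; exact inv_anti₀ (by positivity) this
  have hX_ge : (ε ^ 2)⁻¹ ≤ ∑' p : X, ((a + ε - p) ^ 2)⁻¹ := by
    simpa using (summable_inv_sq_sub hcX hX fun p hp => (hXa p hp).trans_lt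
      (lt_add_of_pos_right a hε)).le_tsum ⟨a, haX⟩ fun p _ => by positivity
  linarith

noncomputable def coulombField (S : Set ℝ) (z : ℂ) : ℂ := ∑' p : S, ((z - p) ^ 2)⁻¹

section CoulombField

variable {S : Set ℝ} {α : ℝ}

lemma coulombField_ofReal (S : Set ℝ) (r : ℝ) :
    coulombField S r = ((∑' p : S, ((r - p) ^ 2)⁻¹ : ℝ) : ℂ) := by
  rw [coulombField, Complex.ofReal_tsum]
  push_cast
  rfl

lemma norm_inv_sq_sub_le {p : ℝ} {z : ℂ} (hp : p < α) (hz : α ≤ z.re) :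
    ‖((z - p) ^ 2)⁻¹‖ ≤ ((α - p) ^ 2)⁻¹ := by
  have hre : α - p ≤ ‖z - p‖ := by
    calc α - p ≤ (z - p).re := by simpa using hz
      _ ≤ ‖z - p‖ := Complex.re_le_norm _
  rw [norm_inv, norm_pow]
  exact inv_anti₀ (by nlinarith) (pow_le_pow_left₀ (by linarith) hre 2)

variable (hα : ∀ p ∈ S, p < α) (hS : Summable fun p : S => ((α - p) ^ 2)⁻¹)
include hα hS

lemma norm_coulombField_le {z : ℂ} (hz : α ≤ z.re) :
    ‖coulombField S z‖ ≤ ∑' p : S, ((α - p) ^ 2)⁻¹ :=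
  tsum_of_norm_bounded hS.hasSum fun p => norm_inv_sq_sub_le (hα p p.2) hz

lemma differentiableOn_coulombField : DifferentiableOn ℂ (coulombField S) {z | α < z.re} := by
  have hunif := tendstoUniformlyOn_tsum (f := fun (p : S) (z : ℂ) => ((z - p) ^ 2)⁻¹) hS
    (s := {z | α < z.re}) fun p z hz => norm_inv_sq_sub_le (hα p p.2) (le_of_lt hz)
  refine hunif.tendstoLocallyUniformlyOn.differentiableOn (Eventually.of_forall fun T => ?_)
    (isOpen_lt continuous_const Complex.continuous_re)
  refine DifferentiableOn.fun_sum fun p _ z hz => DifferentiableAt.differentiableWithinAt ?_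
  have hzp : z - p ≠ 0 := fun h => by
    have := congrArg Complex.re h
    simp only [Complex.sub_re, Complex.ofReal_re, Complex.zero_re, sub_eq_zero] at this
    exact (hα p p.2).not_ge (this ▸ le_of_lt hz)
  fun_prop (disch := exact pow_ne_zero 2 hzp)

end CoulombField

lemma exists_eq_mul_prod_sub_of_zeros {Ω : Set ℂ} (hΩ : IsOpen Ω) {g : ℂ → ℂ}
    (hg : DifferentiableOn ℂ g Ω) {q : ℕ → ℂ} (hq : q.Injective) (hqΩ : ∀ i, q i ∈ Ω)
    (hzero : ∀ i, g (q i) = 0) (n : ℕ) :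
    ∃ h : ℂ → ℂ, DifferentiableOn ℂ h Ω ∧ ∀ z, g z = h z * ∏ i ∈ Finset.range n, (z - q i) := by
  induction n with
  | zero => exact ⟨g, hg, fun z => by simp⟩
  | succ n ih =>
    obtain ⟨h, hh, hgh⟩ := ih
    have hprod : ∏ i ∈ Finset.range n, (q n - q i) ≠ 0 :=
      Finset.prod_ne_zero_iff.2 fun i hi =>
        sub_ne_zero.2 fun h => (Finset.mem_range.1 hi).ne' (hq h)
    have hhn : h (q n) = 0 := by
      simpa [hprod, hzero n] using (hgh (q n)).symm
    refine ⟨dslope h (q n), (Complex.differentiableOn_dslope (hΩ.mem_nhds (hqΩ n))).2 hh,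
      fun z => ?_⟩
    have hdiv := sub_smul_dslope h (q n) z
    rw [hhn, sub_zero, smul_eq_mul] at hdiv
    rw [hgh z, ← hdiv, Finset.prod_range_succ]
    ring

lemma le_norm_sub_of_mem_frontier_halfDisc {α R x : ℝ} {z : ℂ}
    (hz : z ∈ frontier (Metric.ball (α : ℂ) R ∩ {w | α < w.re}))
    (hx : α < x) (hxR : 2 * (x - α) ≤ R) : x - α ≤ ‖z - x‖ := by
  have hopen : IsOpen (Metric.ball (α : ℂ) R ∩ {w | α < w.re}) :=
    Metric.isOpen_ball.inter (isOpen_lt continuous_const Complex.continuous_re)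
  rw [hopen.frontier_eq] at hz
  have hzU : ¬(‖z - α‖ < R ∧ α < z.re) := by
    simpa [dist_eq_norm] using hz.2
  rcases not_and_or.1 hzU with hfar | hleft
  · have := norm_sub_norm_le (z - α) (z - x)
    rw [sub_sub_sub_cancel_left, ← Complex.ofReal_sub, Complex.norm_real, Real.norm_eq_abs,
      abs_of_pos (sub_pos.2 hx)] at this
    linarith
  · calc x - α ≤ -(z - x).re := by simp only [Complex.sub_re, Complex.ofReal_re]; linarith
      _ ≤ ‖z - x‖ := (neg_le_abs _).trans (Complex.abs_re_le_norm _)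

lemma norm_le_mul_prod_of_zeros {g : ℂ → ℂ} {α β B t : ℝ} (hβα : β < α)
    (hg : DifferentiableOn ℂ g {z | β < z.re}) (hB : ∀ z : ℂ, α ≤ z.re → ‖g z‖ ≤ B)
    {q : ℕ → ℝ} (hq : q.Injective) (hzero : ∀ i, g (q i) = 0) (hαt : α < t)
    (htq : ∀ i, t < q i) (n : ℕ) :
    ‖g t‖ ≤ B * ∏ i ∈ Finset.range n, (q i - t) / (q i - α) := by
  have hqα (i : ℕ) : 0 < q i - α := by linarith [htq i]
  obtain ⟨h, hh, hgh⟩ := exists_eq_mul_prod_sub_of_zeros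
    (isOpen_lt continuous_const Complex.continuous_re) hg
    (q := fun i => (q i : ℂ)) (Complex.ofReal_injective.comp hq)
    (fun i => by simpa using hβα.trans (sub_pos.1 (hqα i))) hzero n
  set P := ∏ i ∈ Finset.range n, (q i - α)
  have hP : 0 < P := Finset.prod_pos fun i _ => hqα i
  set R := (t - α) + 2 * ∑ i ∈ Finset.range n, (q i - α) + 1
  set U := Metric.ball (α : ℂ) R ∩ {w | α < w.re}
  have hclosure : closure U ⊆ {w : ℂ | α ≤ w.re} :=
    (closure_mono inter_subset_right).trans
      (closure_lt_subset_le continuous_const Complex.continuous_re)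
  have hfront : ∀ z ∈ frontier U, ‖h z‖ ≤ B / P := by
    intro z hz
    have hPle : P ≤ ∏ i ∈ Finset.range n, ‖z - q i‖ := by
      refine Finset.prod_le_prod (fun i _ => (hqα i).le) fun i hi =>
        le_norm_sub_of_mem_frontier_halfDisc hz (by linarith [hqα i]) ?_
      have := Finset.single_le_sum (fun j _ => (hqα j).le) hi
      linarith
    rw [le_div_iff₀ hP]
    calc ‖h z‖ * P ≤ ‖h z‖ * ∏ i ∈ Finset.range n, ‖z - q i‖ := by gcongr
      _ = ‖g z‖ := by rw [hgh, norm_mul, norm_prod]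
      _ ≤ B := hB z (hclosure (frontier_subset_closure hz))
  have htU : (t : ℂ) ∈ U := by
    refine ⟨?_, by simpa using hαt⟩
    rw [Metric.mem_ball, dist_eq_norm, ← Complex.ofReal_sub, Complex.norm_real, Real.norm_eq_abs,
      abs_of_pos (by linarith)]
    have := Finset.sum_nonneg fun i (_ : i ∈ Finset.range n) => (hqα i).le
    linarith
  have hdc : DiffContOnCl ℂ h U :=
    (hh.mono (hclosure.trans fun w hw => hβα.trans_le hw)).diffContOnCl
  have ht := Complex.norm_le_of_forall_mem_frontier_norm_le
    (Metric.isBounded_ball.subset inter_subset_left) hdc hfront (subset_closure htU)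
  calc ‖g t‖ = ‖h t‖ * ∏ i ∈ Finset.range n, (q i - t) := by
        rw [hgh, norm_mul, norm_prod]
        congr 1
        refine Finset.prod_congr rfl fun i _ => ?_
        rw [← Complex.ofReal_sub, Complex.norm_real, Real.norm_eq_abs, abs_sub_comm,
          abs_of_pos (sub_pos.2 (htq i))]
    _ ≤ B / P * ∏ i ∈ Finset.range n, (q i - t) :=
        mul_le_mul_of_nonneg_right ht (Finset.prod_nonneg fun i _ => (sub_pos.2 (htq i)).le)
    _ = B * ∏ i ∈ Finset.range n, (q i - t) / (q i - α) := by
        rw [Finset.prod_div_distrib]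
        ring

lemma tendsto_prod_range_zero_of_le_one_sub {u : ℕ → ℝ} {k : ℝ} (hk : 0 < k)
    (hu₀ : ∀ i, 0 ≤ u i) (hu : ∀ i, u i ≤ 1 - k / (i + 1)) :
    Tendsto (fun n => ∏ i ∈ Finset.range n, u i) atTop (𝓝 0) := by
  have hexp (n : ℕ) : ∏ i ∈ Finset.range n, u i ≤
      Real.exp (-(k * ∑ i ∈ Finset.range n, (1 / (i + 1) : ℝ))) := by
    rw [Finset.mul_sum, ← Finset.sum_neg_distrib, Real.exp_sum]
    refine Finset.prod_le_prod (fun i _ => hu₀ i) fun i _ => (hu i).trans ?_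
    linarith [Real.add_one_le_exp (-(k * (1 / (i + 1)))), mul_one_div k ((i : ℝ) + 1)]
  have hlim : Tendsto (fun n => Real.exp (-(k * ∑ i ∈ Finset.range n, (1 / (i + 1) : ℝ))))
      atTop (𝓝 0) :=
    Real.tendsto_exp_atBot.comp <| tendsto_neg_atTop_atBot.comp <|
      Real.tendsto_sum_range_one_div_nat_succ_atTop.const_mul_atTop hk
  exact tendsto_of_tendsto_of_tendsto_of_le_of_le tendsto_const_nhds hlim
    (fun n => Finset.prod_nonneg fun i _ => hu₀ i) hexp

theorem eq_zero_of_norm_le_of_zeros {g : ℂ → ℂ} {α β B t L : ℝ} (hβα : β < α)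
    (hg : DifferentiableOn ℂ g {z | β < z.re}) (hB : ∀ z : ℂ, α ≤ z.re → ‖g z‖ ≤ B)
    {q : ℕ → ℝ} (hq : q.Injective) (hzero : ∀ i, g (q i) = 0) (hαt : α < t)
    (htq : ∀ i, t < q i) (hqL : ∀ i, q i - α ≤ L * (i + 1)) : g t = 0 := by
  have hqα (i : ℕ) : 0 < q i - α := by linarith [htq i]
  have hL : 0 < L := by simpa using (hqα 0).trans_le (hqL 0)
  have hratio := tendsto_prod_range_zero_of_le_one_sub (u := fun i => (q i - t) / (q i - α))
    (div_pos (sub_pos.2 hαt) hL) (fun i => div_nonneg (sub_pos.2 (htq i)).le (hqα i).le)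
    fun i => by
      have : (t - α) / (L * (i + 1)) ≤ (t - α) / (q i - α) :=
        div_le_div_of_nonneg_left (sub_pos.2 hαt).le (hqα i) (hqL i)
      have hsplit : (q i - t) / (q i - α) = 1 - (t - α) / (q i - α) := by
        field_simp [(hqα i).ne']
        ring
      rw [div_div, hsplit]
      linarith
  have hlim : Tendsto (fun n => B * ∏ i ∈ Finset.range n, (q i - t) / (q i - α)) atTop (𝓝 0) := by
    simpa only [mul_zero] using hratio.const_mul B
  exact norm_le_zero_iff.1 <|
    ge_of_tendsto' hlim (norm_le_mul_prod_of_zeros hβα hg hB hq hzero hαt htq)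

theorem mem_of_tsum_inv_sq_sub_eq {X Y : Set ℝ} {cX cY C a : ℝ}
    (hXneg : X ⊆ Iio 0) (hcX : 0 < cX) (hX : X.Pairwise fun x y => cX ≤ |x - y|)
    (hYneg : Y ⊆ Iio 0) (hcY : 0 < cY) (hY : Y.Pairwise fun x y => cY ≤ |x - y|)
    {q : ℕ → ℝ} (hq : q.Injective) (hq₀ : ∀ i, 0 < q i) (hqC : ∀ i, q i ≤ C * (i + 1))
    (hfield : ∀ i, ∑' p : X, ((q i - p) ^ 2)⁻¹ = ∑' p : Y, ((q i - p) ^ 2)⁻¹)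
    (haX : a ∈ X) (hagree : X ∩ Ioi a = Y ∩ Ioi a) : a ∈ Y := by
  by_contra haY
  set X' := X ∩ Iic a
  set Y' := Y ∩ Iic a
  have hX' : X'.Pairwise fun x y => cX ≤ |x - y| := hX.mono inter_subset_left
  have hY' : Y'.Pairwise fun x y => cY ≤ |x - y| := hY.mono inter_subset_left
  have hX'a : ∀ p ∈ X', p ≤ a := fun p hp => hp.2
  have hY'a : ∀ p ∈ Y', p < a := fun p hp => hp.2.lt_of_ne fun h => haY (h ▸ hp.1)
  have ha : a < 0 := hXneg haX
  obtain ⟨t, ⟨hat, ht⟩, hlt⟩ :=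
    exists_tsum_inv_sq_sub_lt hcX hX' hcY hY' ⟨haX, le_refl a⟩ hX'a hY'a ha
  obtain ⟨α, haα, hαt⟩ := exists_between hat
  obtain ⟨β, haβ, hβα⟩ := exists_between haα
  have hX'β : ∀ p ∈ X', p < β := fun p hp => (hX'a p hp).trans_lt haβ
  have hY'β : ∀ p ∈ Y', p < β := fun p hp => (hY'a p hp).trans haβ
  have hX'α : ∀ p ∈ X', p < α := fun p hp => (hX'β p hp).trans hβα
  have hY'α : ∀ p ∈ Y', p < α := fun p hp => (hY'β p hp).trans hβα
  set g := fun z => coulombField X' z - coulombField Y' z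
  have hg : DifferentiableOn ℂ g {z | β < z.re} :=
    (differentiableOn_coulombField hX'β (summable_inv_sq_sub hcX hX' hX'β)).sub
      (differentiableOn_coulombField hY'β (summable_inv_sq_sub hcY hY' hY'β))
  have hB (z : ℂ) (hz : α ≤ z.re) :
      ‖g z‖ ≤ ∑' p : X', ((α - p) ^ 2)⁻¹ + ∑' p : Y', ((α - p) ^ 2)⁻¹ :=
    (norm_sub_le _ _).trans <| add_le_add
      (norm_coulombField_le hX'α (summable_inv_sq_sub hcX hX' hX'α) hz)
      (norm_coulombField_le hY'α (summable_inv_sq_sub hcY hY' hY'α) hz)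
  have hzero (i : ℕ) : g (q i) = 0 := by
    have hXq : ∀ p ∈ X, p < q i := fun p hp => (hXneg hp).trans (hq₀ i)
    have hYq : ∀ p ∈ Y, p < q i := fun p hp => (hYneg hp).trans (hq₀ i)
    simp only [g, coulombField_ofReal, sub_eq_zero, Complex.ofReal_inj]
    exact tsum_inv_sq_sub_inter_Iic_eq hcX hX hcY hY hXq hYq hagree (hfield i)
  have hgt := eq_zero_of_norm_le_of_zeros hβα hg hB hq hzero hαt (fun i => ht.trans (hq₀ i))
    (L := C - α) fun i => by
      nlinarith [hqC i, mul_nonneg (neg_nonneg.2 (hαt.trans ht).le) (Nat.cast_nonneg (α := ℝ) i)]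
  simp only [g, coulombField_ofReal, sub_eq_zero, Complex.ofReal_inj] at hgt
  exact hlt.ne hgt.symm

lemma exists_isGreatest_symmDiff {X Y : Set ℝ} {cX cY : ℝ}
    (hcX : 0 < cX) (hX : X.Pairwise fun x y => cX ≤ |x - y|) (hXbdd : BddAbove X)
    (hcY : 0 < cY) (hY : Y.Pairwise fun x y => cY ≤ |x - y|) (hYbdd : BddAbove Y)
    (hXY : X ≠ Y) : ∃ a, IsGreatest (symmDiff X Y) a := by
  have hclosed : IsClosed (symmDiff X Y) :=
    (isClosed_of_pairwise_le_abs_sub hcX (hX.mono sdiff_subset)).union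
      (isClosed_of_pairwise_le_abs_sub hcY (hY.mono sdiff_subset))
  exact ⟨_, hclosed.isGreatest_csSup (symmDiff_nonempty.2 hXY)
    ((hXbdd.union hYbdd).mono symmDiff_subset_union)⟩

theorem stmt_8_general (X Y : Set ℝ)
    (hXneg : X ⊆ Set.Iio 0) (hYneg : Y ⊆ Set.Iio 0)
    (cX : ℝ) (hcX : 0 < cX) (hdiscX : ∀ x ∈ X, ∀ y ∈ X, x ≠ y → cX ≤ |x - y|)
    (cY : ℝ) (hcY : 0 < cY) (hdiscY : ∀ x ∈ Y, ∀ y ∈ Y, x ≠ y → cY ≤ |x - y|)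
    (c C : ℝ) (hc : 0 < c)
    (w : ℕ → ℝ) (hw0 : w 0 = 0)
    (hgap : ∀ n : ℕ, 1 ≤ n → c ≤ w n - w (n - 1) ∧ w n - w (n - 1) ≤ C)
    (hforce : ∀ n : ℕ,
      (∑' x : X, (1 : ℝ) / ((x : ℝ) - w n) ^ 2) = ∑' y : Y, (1 : ℝ) / ((y : ℝ) - w n) ^ 2) :
    X = Y := by
  have hstep (n : ℕ) : c ≤ w (n + 1) - w n ∧ w (n + 1) - w n ≤ C := hgap (n + 1) n.succ_pos
  have hw : StrictMono w := strictMono_nat_of_lt_succ fun n => by linarith [(hstep n).1]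
  have hwC (n : ℕ) : w n ≤ C * n := by
    induction n with
    | zero => simp [hw0]
    | succ n ih => push_cast; linarith [(hstep n).2]
  have hq₀ (i : ℕ) : 0 < w (i + 1) := hw0 ▸ hw i.succ_pos
  have hqC (i : ℕ) : w (i + 1) ≤ C * (i + 1) := by exact_mod_cast hwC (i + 1)
  have hfield (i : ℕ) :
      ∑' p : X, ((w (i + 1) - p) ^ 2)⁻¹ = ∑' p : Y, ((w (i + 1) - p) ^ 2)⁻¹ := by
    simpa only [one_div, sub_sq_comm _ (w (i + 1))] using hforce (i + 1)
  have hbdd {S : Set ℝ} (hS : S ⊆ Iio 0) : BddAbove S := ⟨0, fun p hp => (hS hp).le⟩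
  by_contra hXY
  obtain ⟨a, ha, ha_max⟩ :=
    exists_isGreatest_symmDiff hcX hdiscX (hbdd hXneg) hcY hdiscY (hbdd hYneg) hXY
  have hagree : X ∩ Ioi a = Y ∩ Ioi a := by
    ext p
    refine ⟨fun ⟨hpX, hpa⟩ => ⟨?_, hpa⟩, fun ⟨hpY, hpa⟩ => ⟨?_, hpa⟩⟩ <;> by_contra hp <;>
      exact (ha_max (by simp [Set.mem_symmDiff, *])).not_gt hpa
  have hq := (hw.comp (strictMono_id.add_const 1)).injective
  rcases ha with ⟨haX, haY⟩ | ⟨haY, haX⟩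
  · exact haY (mem_of_tsum_inv_sq_sub_eq hXneg hcX hdiscX hYneg hcY hdiscY hq hq₀ hqC hfield
      haX hagree)
  · exact haX (mem_of_tsum_inv_sq_sub_eq hYneg hcY hdiscY hXneg hcX hdiscX hq hq₀ hqC
      (fun i => (hfield i).symm) haY hagree.symm)

/-- The Coulomb force field exerted at the points of a uniformly spread sequence
`W = {0 = w₀ < w₁ < …} ⊆ [0, ∞)` determines a uniformly discrete configuration of
particles on `(-∞, 0)` uniquely. -/
theorem stmt_8 (X Y : Set ℝ)
    (hXneg : X ⊆ Set.Iio 0) (hYneg : Y ⊆ Set.Iio 0)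
    (cX : ℝ) (hcX : 0 < cX) (hdiscX : ∀ x ∈ X, ∀ y ∈ X, x ≠ y → cX ≤ |x - y|)
    (cY : ℝ) (hcY : 0 < cY) (hdiscY : ∀ x ∈ Y, ∀ y ∈ Y, x ≠ y → cY ≤ |x - y|)
    (c C : ℝ) (hc : 0 < c) (hcC : c ≤ C)
    (w : ℕ → ℝ) (hw0 : w 0 = 0)
    (hgap : ∀ n : ℕ, 1 ≤ n → c ≤ w n - w (n - 1) ∧ w n - w (n - 1) ≤ C)
    (hforce : ∀ n : ℕ,
      (∑' x : X, (1 : ℝ) / ((x : ℝ) - w n) ^ 2) = ∑' y : Y, (1 : ℝ) / ((y : ℝ) - w n) ^ 2) :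
    X = Y :=
  stmt_8_general X Y hXneg hYneg cX hcX hdiscX cY hcY hdiscY c C hc w hw0 hgap hforce
end

section
/- Let F : ℝ_{>0} → ℝ_{>0} be strictly decreasing, and let x < y and w_1 > w_2 > … be reals with w_1 < x, such that y − x > x − w_1 and y − x ≥ w_i − w_{i+1} for all i, and ∑_i F(x − w_i) < ∞. Then ∑_{i≥1} F(y − w_i) + F(y − x) < ∑_{i≥1} F(x − w_i); that is, the total left force on y is strictly smaller than the total left force on x. -/
/-- Key termwise comparison of the extremal-gap theorem: if the gap `(x, y)` is longer
than `x - w₁` and at least as long as every gap `wᵢ - wᵢ₊₁`, then the total left force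
at `y` is strictly smaller than the total left force at `x`. -/
theorem stmt_17 (F : ℝ → ℝ)
    (hFpos : ∀ d, 0 < d → 0 < F d)
    (hFanti : ∀ a b, 0 < a → a < b → F b < F a)
    (x y : ℝ) (hxy : x < y)
    (w : ℕ → ℝ)   -- w i is the particle w_{i+1}
    (hwx : w 0 < x)
    (hwdec : ∀ i : ℕ, w (i + 1) < w i)
    (hgap1 : x - w 0 < y - x)
    (hgaps : ∀ i : ℕ, w i - w (i + 1) ≤ y - x)
    (hsum : Summable (fun i : ℕ => F (x - w i))) :
    Summable (fun i : ℕ => F (y - w i)) ∧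
      F (y - x) + (∑' i : ℕ, F (y - w i)) < ∑' i : ℕ, F (x - w i) := by
  have hanti : StrictAnti w := strictAnti_nat_of_succ_lt hwdec
  have hwix : ∀ i, w i < x := fun i =>
    lt_of_le_of_lt (hanti.antitone (Nat.zero_le i)) hwx
  have hposx : ∀ i, 0 < x - w i := fun i => sub_pos.2 (hwix i)
  have hposy : ∀ i, 0 < y - w i := fun i => sub_pos.2 ((hwix i).trans hxy)
  have hFle : ∀ a b, 0 < a → a ≤ b → F b ≤ F a := by
    intro a b ha hab
    rcases eq_or_lt_of_le hab with rfl | h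
    · exact le_refl _
    · exact (hFanti a b ha h).le
  have hcomp : ∀ i, F (y - w i) ≤ F (x - w (i + 1)) := by
    intro i
    apply hFle _ _ (hposx (i + 1))
    have := hgaps i
    linarith
  have hsum1 : Summable (fun i : ℕ => F (x - w (i + 1))) :=
    (summable_nat_add_iff 1).2 hsum
  have hsumy : Summable (fun i : ℕ => F (y - w i)) :=
    Summable.of_nonneg_of_le (fun i => (hFpos _ (hposy i)).le) hcomp hsum1
  refine ⟨hsumy, ?_⟩
  have hle : (∑' i : ℕ, F (y - w i)) ≤ ∑' i : ℕ, F (x - w (i + 1)) :=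
    Summable.tsum_le_tsum hcomp hsumy hsum1
  have hsplit : (∑' i : ℕ, F (x - w i)) =
      F (x - w 0) + ∑' i : ℕ, F (x - w (i + 1)) := Summable.tsum_eq_zero_add hsum
  have h0 : F (y - x) < F (x - w 0) := hFanti _ _ (hposx 0) hgap1
  rw [hsplit]
  linarith
end
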